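/- arXiv:2506.23842 — 4 statements merged into one kernel-verified Lean document; each statement's English description precedes it below -/
import Mathlib

section
/- Let G be a connected solvable affine algebraic group acting on a smooth projective variety X, and assume every effective cycle on X is rationally equivalent to a G-invariant effective cycle. Let E be a reflexive sheaf with P_X(E)=0. If δ_k P_V(E) > 0 for every G-invariant subvariety V of dimension k for all 1 ≤ k ≤ n-1, then δ_k P_V(E) > 0 for every subvariety V of dimension k, 1 ≤ k ≤ n-1. In other words, equivariant P_δ-positivity implies P_δ-positivity. -/
theorem mul_sum_mul_pos {ι R : Type*} [Fintype ι] [Nonempty ι] [CommRing R] [LinearOrder R]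
    [IsStrictOrderedRing R] {c : R} {a g : ι → R} (ha : ∀ i, 0 < a i) (hg : ∀ i, 0 < c * g i) :
    0 < c * ∑ i, a i * g i := by
  rw [Finset.mul_sum]
  refine Finset.sum_pos (fun i _ => ?_) Finset.univ_nonempty
  rw [mul_left_comm]
  exact mul_pos (ha i) (hg i)

theorem stmt1_general (n : ℕ) {Var : Type*} (dimV : Var → ℕ) (Inv : Var → Prop)
    (P : Var → ℝ) (δ : ℕ → ℝ)
    (hBrion : ∀ V : Var, ∃ (m : ℕ) (a : Fin m → ℝ) (W : Fin m → Var),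
      0 < m ∧ (∀ i, 0 < a i) ∧ (∀ i, Inv (W i)) ∧ (∀ i, dimV (W i) = dimV V) ∧
      P V = ∑ i, a i * P (W i))
    (hequiv : ∀ V, Inv V → 1 ≤ dimV V → dimV V ≤ n - 1 → 0 < δ (dimV V) * P V) :
    ∀ V, 1 ≤ dimV V → dimV V ≤ n - 1 → 0 < δ (dimV V) * P V := by
  intro V h1 h2
  obtain ⟨m, a, W, hm, ha, hInv, hdim, hP⟩ := hBrion V
  have : Nonempty (Fin m) := Fin.pos_iff_nonempty.mp hm
  rw [hP]
  refine mul_sum_mul_pos ha fun i => ?_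
  have hW := hequiv (W i) (hInv i) (hdim i ▸ h1) (hdim i ▸ h2)
  rwa [hdim i] at hW

/-- Equivariant `P_δ`-positivity implies `P_δ`-positivity.  Subvarieties of the
smooth projective `G`-variety `X` (with `G` connected solvable affine acting regularly) are
abstracted to a type `Var` with a dimension function `dimV` and a `G`-invariance predicate
`Inv`; `P V = P_V(E)` for the reflexive sheaf `E` with `P_X(E) = 0` (hypothesis `hPX`).
By Brion's theorem, every subvariety `V` is rationally equivalent to a nonempty positive
combination of `G`-invariant subvarieties of the same dimension, and `P_•(E)` is additive on
such decompositions (hypothesis `hBrion`).  If `δ_k P_V(E) > 0` for every `G`-invariant `V`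
with `1 ≤ dim V ≤ n-1`, then the same holds for every subvariety `V`. -/
theorem stmt1 (n : ℕ) {Var : Type*} (dimV : Var → ℕ) (Inv : Var → Prop)
    (P : Var → ℝ) (δ : ℕ → ℝ) (hδ : ∀ k, δ k = 1 ∨ δ k = -1)
    (PX : ℝ) (hPX : PX = 0)
    (hBrion : ∀ V : Var, ∃ (m : ℕ) (a : Fin m → ℝ) (W : Fin m → Var),
      0 < m ∧ (∀ i, 0 < a i) ∧ (∀ i, Inv (W i)) ∧ (∀ i, dimV (W i) = dimV V) ∧
      P V = ∑ i, a i * P (W i))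
    (hequiv : ∀ V, Inv V → 1 ≤ dimV V → dimV V ≤ n - 1 → 0 < δ (dimV V) * P V) :
    ∀ V, 1 ≤ dimV V → dimV V ≤ n - 1 → 0 < δ (dimV V) * P V :=
  stmt1_general n dimV Inv P δ hBrion hequiv
end

section
/- On the Hirzebruch surface F_r with F²=0, F·H=1, H²=r, let T be the tangent bundle, with ch(T) = 2 + (2-r)F + 2H used exactly through degree 2 with ch₂ = 0 in the stated computation, and let L = aF + bH be ample (a,b > 0 integers). For the dHYM central charge, Z_X(T) = (2ab + rb²) + i(2a + 2b + br), Z_F(T) = -2 + 2ib, Z_{H-rF}(T) = -(2-r) + 2ia, and: Im(Z_F(T)·conj(Z_X(T))) = 4(a + b + ab²) + (2b + 2b³) r, Im(Z_{H-rF}(T)·conj(Z_X(T))) = (4-2r)a + (4a² + 4 - r²)b + 2arb². In particular, if r ∈ {0,1,2} both quantities are positive for all positive a,b, so T is Z-positive for every ample L. -/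
/-- Intersection pairing on divisors of the Hirzebruch surface `F_r`: a pair `(x, y)`
represents the divisor `xF + yH`, with `F² = 0`, `F·H = 1`, `H² = r`. -/
def hirzDot (r : ℝ) (v w : ℝ × ℝ) : ℝ := v.1 * w.2 + v.2 * w.1 + r * v.2 * w.2

/-- dHYM central charge of the rank-2 tangent bundle `T` on `F_r`, using
`ch(T) = 2 + (2-r)F + 2H` with `ch₂(T) = 0`:
`Z_X(T) = rk·ρ₂ L² + ρ₁ L·c₁(T) + ρ₀ ch₂(T) = L² + i L·c₁(T)`. -/
noncomputable def hirzZXT (r : ℝ) (L c1T : ℝ × ℝ) : ℂ :=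
  (hirzDot r L L : ℂ) + Complex.I * (hirzDot r L c1T : ℂ)

/-- `Z_V(T) = 2i (L·V) - c₁(T)·V` for a curve `V` (rank 2, `ρ₁ = i`, `ρ₀ = -1`). -/
noncomputable def hirzZVT (r : ℝ) (L c1T V : ℝ × ℝ) : ℂ :=
  2 * Complex.I * (hirzDot r L V : ℂ) - (hirzDot r c1T V : ℂ)

/-- On the Hirzebruch surface `F_r` (`F² = 0`, `F·H = 1`, `H² = r`), let `T` be
the tangent bundle with `ch(T) = 2 + (2-r)F + 2H` (`ch₂(T) = 0`) and `L = aF + bH` ample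
(`a, b` positive integers).  For the dHYM central charge:
`Z_X(T) = (2ab + rb²) + i(2a + 2b + br)`, `Z_F(T) = -2 + 2ib`,
`Z_{H-rF}(T) = -(2-r) + 2ia`, and
`Im(Z_F(T) conj Z_X(T)) = 4(a + b + ab²) + (2b + 2b³) r`,
`Im(Z_{H-rF}(T) conj Z_X(T)) = (4-2r)a + (4a² + 4 - r²)b + 2arb²`.
In particular, if `r ∈ {0,1,2}` both quantities are positive, so `T` is `Z`-positive for
every such ample `L`. -/
theorem stmt7 (r a b : ℕ) (ha : 0 < a) (hb : 0 < b) :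
    hirzZXT (r : ℝ) ((a : ℝ), (b : ℝ)) (2 - (r : ℝ), 2)
        = ((2 * (a : ℝ) * b + r * b ^ 2 : ℝ) : ℂ)
            + ((2 * (a : ℝ) + 2 * b + b * r : ℝ) : ℂ) * Complex.I ∧
    hirzZVT (r : ℝ) ((a : ℝ), (b : ℝ)) (2 - (r : ℝ), 2) (1, 0)
        = ((-2 : ℝ) : ℂ) + ((2 * (b : ℝ) : ℝ) : ℂ) * Complex.I ∧
    hirzZVT (r : ℝ) ((a : ℝ), (b : ℝ)) (2 - (r : ℝ), 2) (-(r : ℝ), 1)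
        = ((-(2 - (r : ℝ)) : ℝ) : ℂ) + ((2 * (a : ℝ) : ℝ) : ℂ) * Complex.I ∧
    (hirzZVT (r : ℝ) ((a : ℝ), (b : ℝ)) (2 - (r : ℝ), 2) (1, 0) *
        (starRingEnd ℂ) (hirzZXT (r : ℝ) ((a : ℝ), (b : ℝ)) (2 - (r : ℝ), 2))).im
      = 4 * ((a : ℝ) + b + a * b ^ 2) + (2 * (b : ℝ) + 2 * b ^ 3) * r ∧
    (hirzZVT (r : ℝ) ((a : ℝ), (b : ℝ)) (2 - (r : ℝ), 2) (-(r : ℝ), 1) *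
        (starRingEnd ℂ) (hirzZXT (r : ℝ) ((a : ℝ), (b : ℝ)) (2 - (r : ℝ), 2))).im
      = (4 - 2 * (r : ℝ)) * a + (4 * (a : ℝ) ^ 2 + 4 - r ^ 2) * b + 2 * (a : ℝ) * r * b ^ 2 ∧
    (r = 0 ∨ r = 1 ∨ r = 2 →
      0 < (hirzZVT (r : ℝ) ((a : ℝ), (b : ℝ)) (2 - (r : ℝ), 2) (1, 0) *
            (starRingEnd ℂ) (hirzZXT (r : ℝ) ((a : ℝ), (b : ℝ)) (2 - (r : ℝ), 2))).im ∧
      0 < (hirzZVT (r : ℝ) ((a : ℝ), (b : ℝ)) (2 - (r : ℝ), 2) (-(r : ℝ), 1) *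
            (starRingEnd ℂ) (hirzZXT (r : ℝ) ((a : ℝ), (b : ℝ)) (2 - (r : ℝ), 2))).im) := by

  have ha' : (1:ℝ) ≤ (a:ℝ) := by exact_mod_cast ha
  have hb' : (1:ℝ) ≤ (b:ℝ) := by exact_mod_cast hb
  have h4 : (hirzZVT (r : ℝ) ((a : ℝ), (b : ℝ)) (2 - (r : ℝ), 2) (1, 0) *
        (starRingEnd ℂ) (hirzZXT (r : ℝ) ((a : ℝ), (b : ℝ)) (2 - (r : ℝ), 2))).im
      = 4 * ((a : ℝ) + b + a * b ^ 2) + (2 * (b : ℝ) + 2 * b ^ 3) * r := by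
    simp [hirzZVT, hirzZXT, hirzDot]; push_cast; ring
  have h5 : (hirzZVT (r : ℝ) ((a : ℝ), (b : ℝ)) (2 - (r : ℝ), 2) (-(r : ℝ), 1) *
        (starRingEnd ℂ) (hirzZXT (r : ℝ) ((a : ℝ), (b : ℝ)) (2 - (r : ℝ), 2))).im
      = (4 - 2 * (r : ℝ)) * a + (4 * (a : ℝ) ^ 2 + 4 - r ^ 2) * b + 2 * (a : ℝ) * r * b ^ 2 := by
    simp [hirzZVT, hirzZXT, hirzDot]; push_cast; ring
  refine ⟨?_, ?_, ?_, h4, h5, ?_⟩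
  · simp only [hirzZXT, hirzDot]; push_cast; ring
  · simp only [hirzZVT, hirzDot]; push_cast; ring
  · simp only [hirzZVT, hirzDot]; push_cast; ring
  · rintro (rfl | rfl | rfl) <;> rw [h4, h5] <;> push_cast <;>
      constructor <;> nlinarith [sq_nonneg ((a:ℝ)-1), sq_nonneg ((b:ℝ)-1), mul_le_mul ha' hb' zero_le_one (le_trans zero_le_one ha')]
end

section
/- Let π : X̃ → X be the blow-up at a point with exceptional divisor D, E a vector bundle on X with P_X(E) = 0, and for real ε = (ε₀,…,ε_n) define P̃_{ε,c}(π^*E) = (Σ_{j=0}^n (π^*[γ_j] + ε_j cl(D)^{n-j}) ⌣ ch(π^*E) ⌣ c) ⌢ [X̃]. Then: P̃_{ε,X̃}(π^*E) = (-1)^{n-1} rk(E) ε₀ + ε_n (ch_n(E) ⌢ [X]); and for 1 ≤ k ≤ n-1 and c ∈ H^{n-k,n-k}(X̃,ℝ), P̃_{ε,c}(π^*E) = P_{π_*c}(E) + ε_n (ch_k(E) ⌣ π_*c) ⌢ [X] + (-1)^{k-1} rk(E) l(c) ε_{n-k}. -/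
/-!
Split the deformation as `π^*Γ + T + ε_n` with `T = Σ_{j<n} ε_j D^{n-j}`. A pulled-back class
`π^*y` multiplies every positive power of `D` by the scalar `r` of its degree-0 part, so
`T · π^*y = r T`, and only `D^n` survives integration on `X̃`; this leaves exactly one term
`ε_p D^n` in `T · D^p`. Everything else is integrated on `X` through the projection formula.
-/

open Finset

section BlowUp

variable {𝕜 R A : Type*} [CommRing 𝕜] [CommRing R] [CommRing A] [Algebra 𝕜 R] [Algebra 𝕜 A]

theorem AlgHom.map_sum_mul_eq_smul (pb : R →ₐ[𝕜] A) {ι : Type*} {s : Finset ι} {f : ι → R}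
    {i : ι} (hi : i ∈ s) {a : 𝕜} (hfi : f i = algebraMap 𝕜 R a) {x : A}
    (hf : ∀ j ∈ s, j ≠ i → pb (f j) * x = 0) :
    pb (∑ j ∈ s, f j) * x = a • x := by
  rw [map_sum, sum_mul, sum_eq_single_of_mem i hi hf, hfi, AlgHom.commutes, Algebra.smul_def]

variable (D : A) (ε : ℕ → 𝕜) {n : ℕ}

theorem sum_smul_pow_sub_mul_eq_smul {y : A} {r : 𝕜}
    (hy : ∀ m, 1 ≤ m → y * D ^ m = r • D ^ m) :
    (∑ j ∈ range n, ε j • D ^ (n - j)) * y = r • ∑ j ∈ range n, ε j • D ^ (n - j) := by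
  rw [sum_mul, smul_sum]
  refine sum_congr rfl fun j hj => ?_
  rw [smul_mul_assoc, mul_comm, hy _ (by simp at hj; omega), smul_comm]

variable {I : A →ₗ[𝕜] 𝕜} (hDtop : I (D ^ n) = (-1) ^ (n - 1))
  (hDlow : ∀ m, m ≠ n → I (D ^ m) = 0)
include hDtop hDlow

theorem apply_sum_smul_pow_sub_mul_pow {p : ℕ} (hp : p < n) :
    I ((∑ j ∈ range n, ε j • D ^ (n - j)) * D ^ p) = (-1) ^ (n - 1) * ε p := by
  simp only [sum_mul, smul_mul_assoc, ← pow_add, map_sum, map_smul, smul_eq_mul]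
  rw [sum_eq_single_of_mem p (mem_range.2 hp), Nat.sub_add_cancel hp.le, hDtop, mul_comm]
  intro j hj hjp
  rw [hDlow _ (by simp at hj; omega), mul_zero]

variable {pb : R →ₐ[𝕜] A}

theorem apply_deformed_mul_map_mul_pow {Γ y : R} {g r : 𝕜}
    (hΓ : ∀ m, 1 ≤ m → pb Γ * D ^ m = g • D ^ m) (hy : ∀ m, 1 ≤ m → pb y * D ^ m = r • D ^ m)
    {p : ℕ} (hp1 : 1 ≤ p) (hpn : p < n) :
    I ((pb Γ + ∑ j ∈ range (n + 1), ε j • D ^ (n - j)) * pb y * D ^ p)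
      = (-1) ^ (n - 1) * r * ε p := by
  have hyD : pb y * D ^ p = r • D ^ p := hy p hp1
  rw [sum_range_succ, Nat.sub_self, pow_zero, add_mul, add_mul, add_mul, add_mul, mul_assoc,
    hyD, mul_smul_comm, hΓ p hp1, sum_smul_pow_sub_mul_eq_smul D ε hy, smul_mul_assoc,
    smul_mul_assoc, one_mul, smul_mul_assoc, hyD]
  simp only [map_add, map_smul, hDlow p hpn.ne,
    apply_sum_smul_pow_sub_mul_pow D ε hDtop hDlow hpn, smul_eq_mul]
  ring

variable {J : R →ₗ[𝕜] 𝕜} (hpbint : ∀ a, I (pb a) = J a)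
include hpbint

theorem apply_deformed_mul_map (hn : 1 ≤ n) (Γ : R) {y : R} {r : 𝕜}
    (hy : ∀ m, 1 ≤ m → pb y * D ^ m = r • D ^ m) :
    I ((pb Γ + ∑ j ∈ range (n + 1), ε j • D ^ (n - j)) * pb y)
      = J (Γ * y) + (-1) ^ (n - 1) * r * ε 0 + ε n * J y := by
  have hT : I ((∑ j ∈ range n, ε j • D ^ (n - j)) * pb y) = (-1) ^ (n - 1) * r * ε 0 := by
    rw [sum_smul_pow_sub_mul_eq_smul D ε hy, map_smul, ← mul_one (∑ j ∈ range n, _),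
      ← pow_zero D, apply_sum_smul_pow_sub_mul_pow D ε hDtop hDlow hn, smul_eq_mul]
    ring
  rw [sum_range_succ, Nat.sub_self, pow_zero, add_mul, add_mul, smul_mul_assoc, one_mul,
    ← map_mul, map_add, map_add, hpbint, hT, map_smul, hpbint, smul_eq_mul, add_assoc]

end BlowUp

theorem stmt12_general (n k : ℕ) (hk1 : 1 ≤ k) (hkn : k ≤ n - 1)
    {R Rt : Type*} [CommRing R] [CommRing Rt] [Algebra ℝ R] [Algebra ℝ Rt]
    (pb : R →ₐ[ℝ] Rt) (I : Rt →ₗ[ℝ] ℝ) (J : R →ₗ[ℝ] ℝ)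
    (D : Rt) (γ chE : ℕ → R) (ε : ℕ → ℝ) (rk g : ℝ) (c' : R) (l : ℝ)
    (hpbint : ∀ a : R, I (pb a) = J a)
    (hγn : γ n = algebraMap ℝ R g)
    (hch0 : chE 0 = algebraMap ℝ R rk)
    (hDtop : I (D ^ n) = (-1 : ℝ) ^ (n - 1))
    (hDlow : ∀ m : ℕ, m ≠ n → I (D ^ m) = 0)
    (hchD : ∀ j, 1 ≤ j → ∀ m, 1 ≤ m → pb (chE j) * D ^ m = 0)
    (hγD : ∀ j < n, ∀ m, 1 ≤ m → pb (γ j) * D ^ m = 0)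
    (hc'D : ∀ m, 1 ≤ m → pb c' * D ^ m = 0)
    (hPX : J ((∑ j ∈ Finset.range (n + 1), γ j) * ∑ j ∈ Finset.range (n + 1), chE j) = 0)
    (hchtop : ∀ m, m ≠ n → J (chE m) = 0)
    (hchc' : ∀ j, j ≠ k → J (chE j * c') = 0) :
    (I ((∑ j ∈ Finset.range (n + 1), (pb (γ j) + ε j • D ^ (n - j))) *
          pb (∑ j ∈ Finset.range (n + 1), chE j))
        = (-1 : ℝ) ^ (n - 1) * rk * ε 0 + ε n * J (chE n)) ∧
    (I ((∑ j ∈ Finset.range (n + 1), (pb (γ j) + ε j • D ^ (n - j))) *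
          pb (∑ j ∈ Finset.range (n + 1), chE j) *
          (pb c' + ((-1 : ℝ) ^ (n - k) * l) • D ^ (n - k)))
        = J ((∑ j ∈ Finset.range (n + 1), γ j) * (∑ j ∈ Finset.range (n + 1), chE j) * c')
            + ε n * J (chE k * c') + (-1 : ℝ) ^ (k - 1) * rk * l * ε (n - k)) := by
  set Γ := ∑ j ∈ range (n + 1), γ j
  set ch := ∑ j ∈ range (n + 1), chE j
  have hΓ (m : ℕ) (hm : 1 ≤ m) : pb Γ * D ^ m = g • D ^ m :=
    pb.map_sum_mul_eq_smul (self_mem_range_succ n) hγn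
      fun j hj hjn => hγD j (by simp at hj; omega) m hm
  have hch (m : ℕ) (hm : 1 ≤ m) : pb ch * D ^ m = rk • D ^ m :=
    pb.map_sum_mul_eq_smul (mem_range.2 n.succ_pos) hch0
      fun j _ hj0 => hchD j (Nat.one_le_iff_ne_zero.2 hj0) m hm
  have hchc'D (m : ℕ) (hm : 1 ≤ m) : pb (ch * c') * D ^ m = (0 : ℝ) • D ^ m := by
    rw [map_mul, mul_assoc, hc'D m hm, mul_zero, zero_smul]
  have hJch : J ch = J (chE n) := by
    rw [map_sum]; exact sum_eq_single_of_mem n (self_mem_range_succ n) fun j _ => hchtop j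
  have hJchc' : J (ch * c') = J (chE k * c') := by
    rw [sum_mul, map_sum]
    exact sum_eq_single_of_mem k (mem_range.2 (by omega)) fun j _ => hchc' j
  have hsign : (-1 : ℝ) ^ (n - 1) * (-1) ^ (n - k) = (-1) ^ (k - 1) := by
    rw [← pow_add, show n - 1 + (n - k) = k - 1 + 2 * (n - k) by omega, pow_add, pow_mul,
      neg_one_sq, one_pow, mul_one]
  rw [sum_add_distrib, ← map_sum]
  refine ⟨?_, ?_⟩
  · rw [apply_deformed_mul_map D ε hDtop hDlow hpbint (by omega) Γ hch, hPX, hJch, zero_add]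
  · rw [mul_add, mul_smul_comm, map_add, map_smul, mul_assoc, ← map_mul,
      apply_deformed_mul_map D ε hDtop hDlow hpbint (by omega) Γ hchc'D, hJchc',
      apply_deformed_mul_map_mul_pow D ε hDtop hDlow hΓ hch (by omega) (by omega),
      smul_eq_mul, ← mul_assoc]
    linear_combination rk * l * ε (n - k) * hsign

/-- computation of the deformed polynomial slopes on a point blow-up
`π : X̃ → X` with exceptional divisor `D`.  The total cohomology rings of `X` and `X̃` are
abstracted as commutative `ℝ`-algebras `R`, `Rt`, with pullback `pb = π^*` a ring map,
integration functionals `J = (·) ⌢ [X]` and `I = (·) ⌢ [X̃]` (picking the top-degree part),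
`D ∈ Rt` the exceptional class, `γ j` the coefficient classes (with `γ n = g` a constant),
`chE j` the Chern character components of the bundle `E` (with `chE 0 = rk`), and the usual
blow-up identities: `I ∘ pb = J` (projection formula), `pb(α) · D^m = 0` for `α` of positive
degree and `m ≥ 1`, `I(D^n) = (-1)^{n-1}` and `I(D^m) = 0` for `m ≠ n`; `J` kills non-top
degree classes (`hchtop`, `hchc'`); `P_X(E) = 0` (`hPX`).  Then:
`P̃_{ε,X̃}(π^*E) = (-1)^{n-1} rk(E) ε₀ + ε_n (ch_n(E) ⌢ [X])`, and for
`c = π^*c' + (-1)^{n-k} l·D^{n-k} ∈ H^{n-k,n-k}(X̃,ℝ)` with `1 ≤ k ≤ n-1`: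
`P̃_{ε,c}(π^*E) = P_{c'}(E) + ε_n (ch_k(E) ⌣ c') ⌢ [X] + (-1)^{k-1} rk(E) l ε_{n-k}`. -/
theorem stmt12 (n k : ℕ) (hn : 2 ≤ n) (hk1 : 1 ≤ k) (hkn : k ≤ n - 1)
    {R Rt : Type*} [CommRing R] [CommRing Rt] [Algebra ℝ R] [Algebra ℝ Rt]
    (pb : R →ₐ[ℝ] Rt) (I : Rt →ₗ[ℝ] ℝ) (J : R →ₗ[ℝ] ℝ)
    (D : Rt) (γ chE : ℕ → R) (ε : ℕ → ℝ) (rk g : ℝ) (c' : R) (l : ℝ)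
    (hpbint : ∀ a : R, I (pb a) = J a)
    (hγn : γ n = algebraMap ℝ R g)
    (hch0 : chE 0 = algebraMap ℝ R rk)
    (hDtop : I (D ^ n) = (-1 : ℝ) ^ (n - 1))
    (hDlow : ∀ m : ℕ, m ≠ n → I (D ^ m) = 0)
    (hchD : ∀ j, 1 ≤ j → ∀ m, 1 ≤ m → pb (chE j) * D ^ m = 0)
    (hγD : ∀ j < n, ∀ m, 1 ≤ m → pb (γ j) * D ^ m = 0)
    (hc'D : ∀ m, 1 ≤ m → pb c' * D ^ m = 0)
    (hPX : J ((∑ j ∈ Finset.range (n + 1), γ j) * ∑ j ∈ Finset.range (n + 1), chE j) = 0)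
    (hchtop : ∀ m, m ≠ n → J (chE m) = 0)
    (hchc' : ∀ j, j ≠ k → J (chE j * c') = 0) :
    (I ((∑ j ∈ Finset.range (n + 1), (pb (γ j) + ε j • D ^ (n - j))) *
          pb (∑ j ∈ Finset.range (n + 1), chE j))
        = (-1 : ℝ) ^ (n - 1) * rk * ε 0 + ε n * J (chE n)) ∧
    (I ((∑ j ∈ Finset.range (n + 1), (pb (γ j) + ε j • D ^ (n - j))) *
          pb (∑ j ∈ Finset.range (n + 1), chE j) *
          (pb c' + ((-1 : ℝ) ^ (n - k) * l) • D ^ (n - k)))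
        = J ((∑ j ∈ Finset.range (n + 1), γ j) * (∑ j ∈ Finset.range (n + 1), chE j) * c')
            + ε n * J (chE k * c') + (-1 : ℝ) ^ (k - 1) * rk * l * ε (n - k)) :=
  stmt12_general n k hk1 hkn pb I J D γ chE ε rk g c' l hpbint hγn hch0 hDtop hDlow hchD hγD hc'D
    hPX hchtop hchc'
end

section
/- Blow-up positivity transfer, sufficiency with uniform bound: under the setting above, suppose E is uniformly P_δ-positive, i.e. there exist ε̄ > 0 with δ_k P_c(E) ≥ ε̄‖c‖ for all c in the pseudo-effective k-cone of X, 1 ≤ k ≤ n-1, together with: a constant C with l(c) ≤ C‖π_*c‖ for c pseudo-effective on X̃, and a constant C' with |(ch_k(E) ⌣ α) ⌢ [X]| ≤ C'‖α‖. If |ε_j| < ε̄ / (2(C' + C·rk(E))) for all j, ε₀ = (-1)^n (ch_n(E)⌢[X]/rk(E)) ε_n, and (-1)^k δ_k ε_{n-k} > 0 for all 1 ≤ k ≤ n-1, then δ_k P̃_{ε,c}(π^*E) > 0 for every nonzero c in the pseudo-effective k-cone of X̃; indeed δ_k P̃_{ε,c}(π^*E) ≥ (ε̄/2)‖π_*c‖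 when π_*c ≠ 0, and equals (-1)^k rk(E) δ_k ε_{n-k} l-scaled otherwise. -/
/-- Blow-up positivity transfer — sufficiency with uniform bounds (fixed
codimension `k`, `1 ≤ k ≤ n-1`).  Abstract `A` for the `(n-k,n-k)`-classes on `X̃` and `B`
for those on `X`, with pseudo-effective cones `EffXt ⊆ A`, `EffX ⊆ B`, pushforward
`p = π_*`, exceptional functional `l`, slopes `PX c = P_c(E)`, `chk α = (ch_k(E) ⌣ α) ⌢ [X]`,
and deformed slope `Pt c = P̃_{ε,c}(π^*E)` given by the blow-up formula (`hPt`).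
Assume: uniform `P_δ`-positivity of `E` (`huni`, with constant `ε̄ > 0`); `l(c) ≤ C‖π_*c‖`
on the pseudo-effective cone of `X̃`; `|chk| ≤ C'‖·‖`; `π_*` preserves pseudo-effectivity;
nonzero pseudo-effective classes with `π_*c = 0` have `l(c) < 0`;
`|ε_n|, |ε_{n-k}| < ε̄/(2(C' + C·rk))`; and `(-1)^k δ_k ε_{n-k} > 0`.
Then `δ_k P̃_{ε,c}(π^*E) > 0` for every nonzero pseudo-effective `c` on `X̃`, and indeed
`δ_k P̃_{ε,c}(π^*E) ≥ (ε̄/2)‖π_*c‖` whenever `π_*c ≠ 0`. -/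
theorem stmt16 (n k : ℕ) (hn : 2 ≤ n) (hk : 1 ≤ k) (hkn : k ≤ n - 1)
    {A B : Type*} [NormedAddCommGroup A] [NormedSpace ℝ A]
    [NormedAddCommGroup B] [NormedSpace ℝ B]
    (EffXt : Set A) (EffX : Set B)
    (p : A →ₗ[ℝ] B) (l : A →ₗ[ℝ] ℝ)
    (PX : B →ₗ[ℝ] ℝ) (chk : B →ₗ[ℝ] ℝ) (Pt : A → ℝ)
    (rk δk εn εnk : ℝ) (hrk : 0 < rk) (hδ : δk = 1 ∨ δk = -1)
    (hPt : ∀ c : A, Pt c = PX (p c) + εn * chk (p c) + (-1 : ℝ) ^ (k - 1) * rk * l c * εnk)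
    (εb C C' : ℝ) (hεb : 0 < εb) (hC : 0 ≤ C) (hC' : 0 ≤ C')
    (huni : ∀ c ∈ EffX, εb * ‖c‖ ≤ δk * PX c)
    (hl : ∀ c ∈ EffXt, l c ≤ C * ‖p c‖)
    (hch : ∀ α : B, |chk α| ≤ C' * ‖α‖)
    (hpush : ∀ c ∈ EffXt, p c ∈ EffX)
    (hexc : ∀ c ∈ EffXt, c ≠ 0 → p c = 0 → l c < 0)
    (hεn : |εn| < εb / (2 * (C' + C * rk)))
    (hεnk : |εnk| < εb / (2 * (C' + C * rk)))
    (hsign : 0 < (-1 : ℝ) ^ k * δk * εnk) :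
    ∀ c ∈ EffXt, c ≠ 0 →
      0 < δk * Pt c ∧ (p c ≠ 0 → εb / 2 * ‖p c‖ ≤ δk * Pt c) := by

  intro c hc hc0
  have habs : |δk| = 1 := by rcases hδ with h | h <;> simp [h]
  -- (-1)^(k-1) = -(-1)^k
  have hpw : ((-1 : ℝ)) ^ k = -((-1 : ℝ)) ^ (k - 1) := by
    conv_lhs => rw [show k = (k - 1) + 1 by omega]
    rw [pow_succ]; ring
  have hs : (-1 : ℝ) ^ k * δk * εnk = |εnk| := by
    have h1 : |(-1 : ℝ) ^ k * δk * εnk| = |εnk| := by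
      rw [abs_mul, abs_mul, abs_pow, abs_neg, abs_one, one_pow, habs]; ring
    rw [← h1]; exact (abs_of_pos hsign).symm
  have hneg : ((-1 : ℝ)) ^ (k - 1) * δk * εnk = -|εnk| := by
    have h2 : ((-1 : ℝ)) ^ (k - 1) = -((-1 : ℝ)) ^ k := by linarith
    calc ((-1 : ℝ)) ^ (k - 1) * δk * εnk = -((-1 : ℝ) ^ k * δk * εnk) := by rw [h2]; ring
      _ = -|εnk| := by rw [hs]
  have key : δk * Pt c = δk * PX (p c) + δk * (εn * chk (p c)) - |εnk| * rk * l c := by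
    rw [hPt c]; linear_combination (rk * l c) * hneg
  have hεnk0 : 0 < |εnk| := hs ▸ hsign
  have hb2 : |chk (p c)| ≤ C' * ‖p c‖ := hch _
  have hδε : -(|εn| * (C' * ‖p c‖)) ≤ δk * (εn * chk (p c)) := by
    have h3 : |δk * (εn * chk (p c))| ≤ |εn| * (C' * ‖p c‖) := by
      rw [abs_mul, abs_mul, habs, one_mul]
      exact mul_le_mul_of_nonneg_left hb2 (abs_nonneg _)
    linarith [neg_abs_le (δk * (εn * chk (p c))), abs_le.mp h3]
  by_cases hp : p c = 0
  · have hlc := hexc c hc hc0 hp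
    refine ⟨?_, fun h => absurd hp h⟩
    rw [key, hp]
    simp only [map_zero, mul_zero, add_zero, zero_sub, zero_add]
    nlinarith [mul_pos (mul_pos hεnk0 hrk) (neg_pos.mpr hlc)]
  · -- D = C' + C * rk must be positive, else hεn is absurd
    have hD : 0 ≤ C' + C * rk := by positivity
    rcases hD.eq_or_lt with hD0 | hD0
    · exfalso
      rw [← hD0] at hεn
      simp only [mul_zero, div_zero] at hεn
      exact absurd hεn (abs_nonneg εn).not_gt
    · have hnorm : 0 < ‖p c‖ := norm_pos_iff.mpr hp
      have hb1 : εb * ‖p c‖ ≤ δk * PX (p c) := huni _ (hpush c hc)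
      have hl' := hl c hc
      have e1 : |εnk| * rk * l c ≤ |εnk| * rk * (C * ‖p c‖) :=
        mul_le_mul_of_nonneg_left hl' (by positivity)
      have tsum : |εn| * C' + |εnk| * (C * rk) ≤ εb / 2 := by
        have h1 : |εn| * C' ≤ εb / (2 * (C' + C * rk)) * C' :=
          mul_le_mul_of_nonneg_right hεn.le hC'
        have h2 : |εnk| * (C * rk) ≤ εb / (2 * (C' + C * rk)) * (C * rk) :=
          mul_le_mul_of_nonneg_right hεnk.le (by positivity)
        have h3 : εb / (2 * (C' + C * rk)) * C' + εb / (2 * (C' + C * rk)) * (C * rk)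
            = εb / 2 := by field_simp
        linarith
      have t := mul_le_mul_of_nonneg_right tsum (norm_nonneg (p c))
      have main : εb / 2 * ‖p c‖ ≤ δk * Pt c := by
        rw [key]; nlinarith [hb1, hδε, e1, t]
      exact ⟨lt_of_lt_of_le (by positivity) main, fun _ => main⟩
end
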